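/- arXiv:1508.03181 — 5 statements merged into one kernel-verified Lean document; each statement's English description precedes it below -/
import Mathlib

section
/- Consider the one-pool pooling problem. For every subset J' ⊆ [n], every (x, y) in the feasible set F(J') of the linear program LP(J') is pooling-feasible. -/
/-!
One-pool pooling problem (with `m + 1 ≥ 1` inputs, `n` outputs, `q` qualities):
for every subset `J' ⊆ [n]`, every `(x, y)` in the feasible set `F(J')` of the
linear program `LP(J')` is pooling-feasible.
-/

open Finset

/-- `(x, y)` is a flow: nonnegative, flow conservation at the pool, pool
capacity `C`, and arc capacities `u`, `w`. -/
def IsFlow (m n : ℕ) (u : Fin (m + 1) → ℝ) (w : Fin n → ℝ) (C : ℝ)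
    (x : Fin (m + 1) → ℝ) (y : Fin n → ℝ) : Prop :=
  (∀ i, 0 ≤ x i) ∧ (∀ j, 0 ≤ y j) ∧ (∑ i, x i = ∑ j, y j) ∧
    (∑ i, x i ≤ C) ∧ (∀ i, x i ≤ u i) ∧ (∀ j, y j ≤ w j)

/-- `(x, y)` is pooling-feasible: it is a flow and there are pool quality
values `p` satisfying the blending equation and the output quality bounds. -/
def PoolingFeasible (m n q : ℕ) (u : Fin (m + 1) → ℝ) (w : Fin n → ℝ) (C : ℝ)
    (lam : Fin (m + 1) → Fin q → ℝ) (mu : Fin n → Fin q → ℝ)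
    (x : Fin (m + 1) → ℝ) (y : Fin n → ℝ) : Prop :=
  IsFlow m n u w C x y ∧
    ∃ p : Fin q → ℝ,
      (∀ k, p k * (∑ j, y j) = ∑ i, lam i k * x i) ∧
      (∀ j k, p k * y j ≤ mu j k * y j)

/-- `(x, y)` belongs to the feasible set `F(J')` of the linear program
`LP(J')`. -/
def LPFeasible (m n q : ℕ) (u : Fin (m + 1) → ℝ) (w : Fin n → ℝ) (C : ℝ)
    (lam : Fin (m + 1) → Fin q → ℝ) (mu : Fin n → Fin q → ℝ)
    (J' : Set (Fin n)) (x : Fin (m + 1) → ℝ) (y : Fin n → ℝ) : Prop :=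
  IsFlow m n u w C x y ∧ (∀ j, j ∉ J' → y j = 0) ∧
    ∀ j ∈ J', ∀ k,
      ∑ i : Fin m, (lam i.castSucc k - lam (Fin.last m) k) * x i.castSucc
        ≤ (mu j k - lam (Fin.last m) k) * ∑ i, x i

theorem stmt2 (m n q : ℕ) (hn : 0 < n) (hq : 0 < q)
    (u : Fin (m + 1) → ℝ) (w : Fin n → ℝ) (C : ℝ)
    (lam : Fin (m + 1) → Fin q → ℝ) (mu : Fin n → Fin q → ℝ)
    (J' : Set (Fin n)) (x : Fin (m + 1) → ℝ) (y : Fin n → ℝ)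
    (h : LPFeasible m n q u w C lam mu J' x y) :
    PoolingFeasible m n q u w C lam mu x y := by
  obtain ⟨hf, hz, hlp⟩ := h
  have hx := hf.1
  have hy := hf.2.1
  have hcons := hf.2.2.1
  refine ⟨hf, ?_⟩
  have hS : 0 ≤ ∑ i, x i := Finset.sum_nonneg fun i _ => hx i
  rcases eq_or_lt_of_le hS with hS0 | hSpos
  · -- all flows are zero
    have hx0 : ∀ i, x i = 0 := by
      intro i
      have := (Finset.sum_eq_zero_iff_of_nonneg (fun i _ => hx i)).mp hS0.symm
      exact this i (Finset.mem_univ i)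
    have hy0 : ∀ j, y j = 0 := by
      intro j
      have hY : ∑ j, y j = 0 := by rw [← hcons, ← hS0]
      exact (Finset.sum_eq_zero_iff_of_nonneg (fun j _ => hy j)).mp hY j
        (Finset.mem_univ j)
    exact ⟨0, fun k => by simp [hx0], fun j k => by simp [hy0]⟩
  · set S := ∑ i, x i with hSdef
    refine ⟨fun k => (∑ i, lam i k * x i) / S, ?_, ?_⟩
    · intro k
      rw [← hcons, div_mul_cancel₀]
      exact ne_of_gt hSpos
    · intro j k
      rcases eq_or_lt_of_le (hy j) with hyj0 | hyjpos
      · rw [← hyj0, mul_zero, mul_zero]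
      · have hj : j ∈ J' := by
          by_contra hj
          exact absurd (hz j hj) (ne_of_gt hyjpos)
        have key : ∑ i : Fin m, (lam i.castSucc k - lam (Fin.last m) k) * x i.castSucc
            = (∑ i, lam i k * x i) - lam (Fin.last m) k * S := by
          rw [hSdef, Fin.sum_univ_castSucc (f := fun i => lam i k * x i),
            Fin.sum_univ_castSucc (f := fun i => x i)]
          simp only [sub_mul, Finset.sum_sub_distrib, mul_add, Finset.mul_sum]
          ring
        have hineq := hlp j hj k
        rw [key, sub_mul] at hineq
        have hA : ∑ i, lam i k * x i ≤ mu j k * S := by linarith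
        have hp : (∑ i, lam i k * x i) / S ≤ mu j k :=
          (div_le_iff₀ hSpos).mpr (by linarith)
        exact mul_le_mul_of_nonneg_right hp (hy j)
end

section
/- Consider the one-pool pooling problem. For every subset J' ⊆ [n] with F(J') ≠ ∅, val(J') is an upper bound on the optimal value of the pooling problem; that is, the infimum of c·x + d·y over all pooling-feasible flows (x, y) is at most val(J'). -/
/-!
One-pool pooling problem (with `m + 1 ≥ 1` inputs, `n` outputs, `q` qualities):
for every subset `J' ⊆ [n]` with `F(J') ≠ ∅`, the infimum of the objective
over all pooling-feasible flows is at most `val(J')`.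
-/

open Finset

/-- `val(J')`: the optimal (infimum) value of the linear program `LP(J')`. -/
noncomputable def lpVal (m n q : ℕ) (c u : Fin (m + 1) → ℝ) (d w : Fin n → ℝ)
    (C : ℝ) (lam : Fin (m + 1) → Fin q → ℝ) (mu : Fin n → Fin q → ℝ)
    (J' : Set (Fin n)) : ℝ :=
  sInf {v | ∃ x y, LPFeasible m n q u w C lam mu J' x y ∧
    v = ∑ i, c i * x i + ∑ j, d j * y j}


lemma lp_to_pool (m n q : ℕ) (u : Fin (m + 1) → ℝ) (w : Fin n → ℝ) (C : ℝ)
    (lam : Fin (m + 1) → Fin q → ℝ) (mu : Fin n → Fin q → ℝ)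
    (J' : Set (Fin n)) (x : Fin (m + 1) → ℝ) (y : Fin n → ℝ)
    (h : LPFeasible m n q u w C lam mu J' x y) :
    PoolingFeasible m n q u w C lam mu x y := by
  obtain ⟨hf, hz, hlp⟩ := h
  refine ⟨hf, ?_⟩
  obtain ⟨hx, hy, hcons, _, _, _⟩ := hf
  by_cases hT0 : (∑ i, x i) = 0
  · have hxz : ∀ i ∈ Finset.univ, x i = 0 :=
      (Finset.sum_eq_zero_iff_of_nonneg (fun i _ => hx i)).mp hT0
    have hyz : ∀ j ∈ Finset.univ, y j = 0 :=
      (Finset.sum_eq_zero_iff_of_nonneg (fun j _ => hy j)).mp (hcons ▸ hT0)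
    refine ⟨0, fun k => ?_, fun j k => ?_⟩
    · simp only [Pi.zero_apply, zero_mul]
      exact (Finset.sum_eq_zero (fun i hi => by rw [hxz i hi, mul_zero])).symm
    · rw [hyz j (Finset.mem_univ j)]; simp
  · have hTpos : 0 < ∑ i, x i :=
      lt_of_le_of_ne (Finset.sum_nonneg (fun i _ => hx i)) (Ne.symm hT0)
    refine ⟨fun k => (∑ i, lam i k * x i) / (∑ i, x i), fun k => ?_, fun j k => ?_⟩
    · rw [← hcons, div_mul_cancel₀ _ hT0]
    · rcases eq_or_lt_of_le (hy j) with hyj | hyj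
      · rw [← hyj]; simp
      · have hjJ : j ∈ J' := by
          by_contra hc
          exact absurd (hz j hc) (by linarith)
        have hkey : ∑ i : Fin m, (lam i.castSucc k - lam (Fin.last m) k) * x i.castSucc
            = ∑ i, lam i k * x i - lam (Fin.last m) k * ∑ i, x i := by
          rw [Fin.sum_univ_castSucc (f := fun i => lam i k * x i),
            Fin.sum_univ_castSucc (f := x)]
          rw [show (∑ i : Fin m, (lam i.castSucc k - lam (Fin.last m) k) * x i.castSucc)
              = (∑ i : Fin m, lam i.castSucc k * x i.castSucc)
                - lam (Fin.last m) k * ∑ i : Fin m, x i.castSucc by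
            rw [Finset.mul_sum, ← Finset.sum_sub_distrib]
            exact Finset.sum_congr rfl (fun i _ => by ring)]
          ring
        have hineq := hlp j hjJ k
        rw [hkey] at hineq
        have hple : (∑ i, lam i k * x i) / (∑ i, x i) ≤ mu j k := by
          rw [div_le_iff₀ hTpos]
          nlinarith [hineq]
        exact mul_le_mul_of_nonneg_right hple (le_of_lt hyj)

theorem stmt3 (m n q : ℕ) (hn : 0 < n) (hq : 0 < q)
    (c u : Fin (m + 1) → ℝ) (d w : Fin n → ℝ) (C : ℝ)
    (lam : Fin (m + 1) → Fin q → ℝ) (mu : Fin n → Fin q → ℝ)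
    (J' : Set (Fin n))
    (hne : ∃ x y, LPFeasible m n q u w C lam mu J' x y) :
    sInf {v | ∃ x y, PoolingFeasible m n q u w C lam mu x y ∧
        v = ∑ i, c i * x i + ∑ j, d j * y j}
      ≤ lpVal m n q c u d w C lam mu J' := by
  obtain ⟨x0, y0, h0⟩ := hne
  apply csInf_le_csInf
  · refine ⟨-(∑ i, |c i| * u i) - ∑ j, |d j| * w j, ?_⟩
    rintro v ⟨x, y, ⟨⟨hx, hy, _, _, hxu, hyw⟩, _⟩, rfl⟩
    have h1 : -(∑ i, |c i| * u i) ≤ ∑ i, c i * x i := by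
      rw [← Finset.sum_neg_distrib]
      refine Finset.sum_le_sum (fun i _ => ?_)
      have : |c i * x i| ≤ |c i| * u i := by
        rw [abs_mul]
        exact mul_le_mul_of_nonneg_left (by rw [abs_of_nonneg (hx i)]; exact hxu i)
          (abs_nonneg _)
      linarith [neg_abs_le (c i * x i)]
    have h2 : -(∑ j, |d j| * w j) ≤ ∑ j, d j * y j := by
      rw [← Finset.sum_neg_distrib]
      refine Finset.sum_le_sum (fun j _ => ?_)
      have : |d j * y j| ≤ |d j| * w j := by
        rw [abs_mul]
        exact mul_le_mul_of_nonneg_left (by rw [abs_of_nonneg (hy j)]; exact hyw j)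
          (abs_nonneg _)
      linarith [neg_abs_le (d j * y j)]
    linarith
  · exact ⟨_, x0, y0, h0, rfl⟩
  · rintro v ⟨x, y, hlp, rfl⟩
    exact ⟨x, y, lp_to_pool m n q u w C lam mu J' x y hlp, rfl⟩
end

section
/- Consider the one-pool pooling problem. Let z ∈ Δ^{m−1} and let (x, y) be a pooling-feasible flow with Σ_{i=1}^m x_i > 0 and x_i = z_i · (Σ_{i'=1}^m x_{i'}) for all i ∈ [m−1]. Then the objective value c·x + d·y of (x, y) is at least val(J(z)). -/
/-!
One-pool pooling problem (with `m + 1 ≥ 1` inputs, `n` outputs, `q` qualities):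
if `z ∈ Δ^{m−1}` and `(x, y)` is a pooling-feasible flow with positive total
flow whose input proportions are given by `z`, then its objective value is at
least `val(J(z))`.
-/

open Finset

/-- `J(z)`: the reachable output set of a point `z` of the simplex. -/
def reachSet (m n q : ℕ) (lam : Fin (m + 1) → Fin q → ℝ)
    (mu : Fin n → Fin q → ℝ) (z : Fin m → ℝ) : Set (Fin n) :=
  {j | ∀ k, ∑ i : Fin m, (lam i.castSucc k - lam (Fin.last m) k) * z i
    ≤ mu j k - lam (Fin.last m) k}

theorem stmt5 (m n q : ℕ) (hn : 0 < n) (hq : 0 < q)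
    (c u : Fin (m + 1) → ℝ) (d w : Fin n → ℝ) (C : ℝ)
    (lam : Fin (m + 1) → Fin q → ℝ) (mu : Fin n → Fin q → ℝ)
    -- z is a point of the simplex Δ^{m−1}:
    (z : Fin m → ℝ) (hz0 : ∀ i, 0 ≤ z i) (hz1 : ∑ i, z i ≤ 1)
    -- (x, y) is a pooling-feasible flow corresponding to z:
    (x : Fin (m + 1) → ℝ) (y : Fin n → ℝ)
    (hfeas : PoolingFeasible m n q u w C lam mu x y)
    (hpos : 0 < ∑ i, x i)
    (hxz : ∀ i : Fin m, x i.castSucc = z i * ∑ i', x i') :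
    lpVal m n q c u d w C lam mu (reachSet m n q lam mu z)
      ≤ ∑ i, c i * x i + ∑ j, d j * y j := by
  obtain ⟨hflow, p, hpk, hpq⟩ := hfeas
  obtain ⟨hx0, hy0, hcons, hcap, hxu, hyw⟩ := hflow
  set T := ∑ i, x i with hT
  have hTne : T ≠ 0 := ne_of_gt hpos
  -- value of p
  have hpval : ∀ k, p k = lam (Fin.last m) k
      + ∑ i : Fin m, (lam i.castSucc k - lam (Fin.last m) k) * z i := by
    intro k
    have hsum : ∑ i, lam i k * x i
        = (lam (Fin.last m) k
          + ∑ i : Fin m, (lam i.castSucc k - lam (Fin.last m) k) * z i) * T := by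
      have hxlast : x (Fin.last m) = T - ∑ i : Fin m, z i * T := by
        have := Fin.sum_univ_castSucc (f := x)
        simp only [← hT] at this
        have h2 : ∑ i : Fin m, x i.castSucc = ∑ i : Fin m, z i * T := by
          exact Finset.sum_congr rfl fun i _ => hxz i
        linarith [this, h2]
      rw [Fin.sum_univ_castSucc (f := fun i => lam i k * x i)]
      have h3 : ∀ i : Fin m, lam i.castSucc k * x i.castSucc
          = lam i.castSucc k * (z i * T) := fun i => by rw [hxz i]
      rw [Finset.sum_congr rfl fun i _ => h3 i, hxlast]
      have e1 : ∑ i : Fin m, lam i.castSucc k * (z i * T)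
          = (∑ i : Fin m, lam i.castSucc k * z i) * T := by
        rw [Finset.sum_mul]; exact Finset.sum_congr rfl fun i _ => by ring
      have e2 : ∑ i : Fin m, z i * T = (∑ i : Fin m, z i) * T :=
        (Finset.sum_mul _ _ _).symm
      have e3 : ∑ i : Fin m, (lam i.castSucc k - lam (Fin.last m) k) * z i
          = (∑ i : Fin m, lam i.castSucc k * z i)
            - lam (Fin.last m) k * ∑ i : Fin m, z i := by
        rw [Finset.mul_sum, ← Finset.sum_sub_distrib]
        exact Finset.sum_congr rfl fun i _ => by ring
      rw [e1, e2, e3]; ring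
    have h := hpk k
    rw [← hcons] at h
    have : p k * T = (lam (Fin.last m) k
        + ∑ i : Fin m, (lam i.castSucc k - lam (Fin.last m) k) * z i) * T := by
      rw [h, hsum]
    exact mul_right_cancel₀ hTne this
  -- membership in the LP feasible set
  have hmem : LPFeasible m n q u w C lam mu (reachSet m n q lam mu z) x y := by
    refine ⟨⟨hx0, hy0, hcons, hcap, hxu, hyw⟩, ?_, ?_⟩
    · intro j hj
      simp only [reachSet, Set.mem_setOf_eq, not_forall, not_le] at hj
      obtain ⟨k, hk⟩ := hj
      have hgt : mu j k < p k := by rw [hpval k]; linarith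
      have hle := hpq j k
      nlinarith [hy0 j]
    · intro j hj k
      have hsum : ∑ i : Fin m, (lam i.castSucc k - lam (Fin.last m) k) * x i.castSucc
          = (∑ i : Fin m, (lam i.castSucc k - lam (Fin.last m) k) * z i) * T := by
        rw [Finset.sum_mul]
        exact Finset.sum_congr rfl fun i _ => by rw [hxz i]; ring
      rw [hsum, ← hT]
      have := hj k
      have hTnn : (0:ℝ) ≤ T := le_of_lt hpos
      exact mul_le_mul_of_nonneg_right this hTnn
  -- bounded below
  have hbdd : BddBelow {v | ∃ x' y', LPFeasible m n q u w C lam mu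
      (reachSet m n q lam mu z) x' y' ∧
      v = ∑ i, c i * x' i + ∑ j, d j * y' j} := by
    refine ⟨-(∑ i, |c i| * u i) - ∑ j, |d j| * w j, ?_⟩
    rintro v ⟨x', y', ⟨⟨hx0', hy0', _, _, hxu', hyw'⟩, _, _⟩, rfl⟩
    have h1 : ∀ i, -( |c i| * u i) ≤ c i * x' i := by
      intro i
      have := abs_nonneg (c i)
      nlinarith [neg_abs_le (c i), hx0' i, hxu' i]
    have h2 : ∀ j, -( |d j| * w j) ≤ d j * y' j := by
      intro j
      have := abs_nonneg (d j)
      nlinarith [neg_abs_le (d j), hy0' j, hyw' j]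
    have hs1 : -(∑ i, |c i| * u i) ≤ ∑ i, c i * x' i := by
      rw [← Finset.sum_neg_distrib]
      exact Finset.sum_le_sum fun i _ => h1 i
    have hs2 : -(∑ j, |d j| * w j) ≤ ∑ j, d j * y' j := by
      rw [← Finset.sum_neg_distrib]
      exact Finset.sum_le_sum fun j _ => h2 j
    linarith
  exact csInf_le hbdd ⟨x, y, hmem, rfl⟩
end

section
/- Let d, n, q be positive integers, let a_k ∈ ℝ^d for k ∈ [q] and b_{jk} ∈ ℝ for j ∈ [n], k ∈ [q]. Then the number of vectors ε ∈ {0,1}^{n×q} with P(ε) ≠ ∅ is at most Σ_{i=0}^{d} C(q, i) · n^i, where C(q, i) denotes the binomial coefficient. -/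
/-!
Induction on the number `q` of families. Every cell of the arrangement formed by the last `q`
families is convex, so the first functional `a₀` maps it onto an interval, and the `n` parallel
hyperplanes `a₀ = b₀ⱼ` split it into at most `1 + m` cells, where `m` counts the hyperplanes that
meet the cell and leave part of it strictly on their positive side. The cells met by one
hyperplane are cells of the arrangement induced on that hyperplane, a space of dimension `d - 1`.
This gives `N(q + 1, d) ≤ N(q, d) + n N(q, d - 1)`, which `∑_{i ≤ d} C(q, i) nⁱ` satisfies with
equality by Pascal's rule.
-/

open Finset Module

theorem ncard_image_threshold_le {ι : Type*} [Finite ι] (c : ι → ℝ) {T : Set ℝ}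
    (hT : T.OrdConnected) :
    ((fun t j => decide (c j < t)) '' T).ncard ≤ {j | c j ∈ T ∧ ∃ t ∈ T, c j < t}.ncard + 1 := by
  set C := {j | c j ∈ T ∧ ∃ t ∈ T, c j < t}
  have below_subset {t t'} (ht' : t' ∈ T) (hle : t ≤ t') :
      {j ∈ C | c j < t} ⊆ {j ∈ C | c j < t'} := fun j hj => ⟨hj.1, hj.2.trans_le hle⟩
  -- between two thresholds `t ≤ t'` of `T` only indices of `C` change sign
  have eq_of_ncard_eq {t t'} (ht : t ∈ T) (ht' : t' ∈ T) (hle : t ≤ t')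
      (hcard : {j ∈ C | c j < t'}.ncard ≤ {j ∈ C | c j < t}.ncard) :
      (fun j => decide (c j < t)) = fun j => decide (c j < t') := by
    have heq := Set.eq_of_subset_of_ncard_le (below_subset ht' hle) hcard
    funext j
    by_contra hne
    have hj : t ≤ c j ∧ c j < t' := by
      refine ⟨not_lt.1 fun h => hne (by simp [h, h.trans_le hle]), by_contra fun h => hne ?_⟩
      have : ¬c j < t := fun h' => h (h'.trans_le hle)
      simp [h, this]
    have hjC : j ∈ C := ⟨hT.out ht ht' ⟨hj.1, hj.2.le⟩, t', ht', hj.2⟩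
    have : j ∈ {j ∈ C | c j < t} := heq ▸ ⟨hjC, hj.2⟩
    exact absurd this.2 (not_lt.2 hj.1)
  calc ((fun t j => decide (c j < t)) '' T).ncard
      ≤ (Set.Iic C.ncard).ncard := by
        refine Set.ncard_le_ncard_of_injOn (fun p => {j ∈ C | p j}.ncard) ?_ ?_ (Set.finite_Iic _)
        · rintro _ ⟨t, -, rfl⟩
          exact Set.ncard_le_ncard (Set.sep_subset _ _)
        · rintro _ ⟨t, ht, rfl⟩ _ ⟨t', ht', rfl⟩ hcard
          simp only [decide_eq_true_eq] at hcard
          rcases le_total t t' with hle | hle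
          · exact eq_of_ncard_eq ht ht' hle hcard.ge
          · exact (eq_of_ncard_eq ht' ht hle hcard.le).symm
    _ = C.ncard + 1 := by simp

section

variable {E : Type*} [AddCommGroup E] [Module ℝ E] {n q : ℕ}

noncomputable def signPattern (a : Fin q → E →ₗ[ℝ] ℝ) (b : Fin q → Fin n → ℝ) (z : E) :
    Fin q → Fin n → Bool :=
  fun k j => decide (b k j < a k z)

theorem convex_signPattern_preimage (a : Fin q → E →ₗ[ℝ] ℝ) (b : Fin q → Fin n → ℝ)
    (ε : Fin q → Fin n → Bool) : Convex ℝ (signPattern a b ⁻¹' {ε}) := by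
  have : signPattern a b ⁻¹' {ε} = ⋂ k, ⋂ j, a k ⁻¹' {t | decide (b k j < t) = ε k j} := by
    ext z
    simp [signPattern, funext_iff]
  rw [this]
  refine convex_iInter fun k => convex_iInter fun j => Convex.linear_preimage ?_ _
  cases ε k j
  · simpa [Set.Iic] using convex_Iic (b k j)
  · simpa [Set.Ioi] using convex_Ioi (b k j)

theorem image_signPattern_hyperplane (a : Fin q → E →ₗ[ℝ] ℝ) (b : Fin q → Fin n → ℝ)
    (f : E →ₗ[ℝ] ℝ) (z₀ : E) :
    signPattern a b '' {z | f z = f z₀} =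
      Set.range (signPattern (fun k => a k ∘ₗ (LinearMap.ker f).subtype)
        (fun k j => b k j - a k z₀)) := by
  have shift (w : LinearMap.ker f) : signPattern a b (z₀ + w) =
      signPattern (fun k => a k ∘ₗ (LinearMap.ker f).subtype) (fun k j => b k j - a k z₀) w := by
    ext k j
    simp [signPattern, sub_lt_iff_lt_add']
  ext ε
  constructor
  · rintro ⟨z, hz, rfl⟩
    have hz' : z - z₀ ∈ LinearMap.ker f := by simp_all
    exact ⟨⟨z - z₀, hz'⟩, by simpa using (shift ⟨z - z₀, hz'⟩).symm⟩
  · rintro ⟨w, rfl⟩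
    exact ⟨z₀ + w, by simp, shift w⟩

theorem sum_range_choose_succ_mul_pow (m n d : ℕ) :
    ∑ i ∈ range (d + 1), (m + 1).choose i * n ^ i =
      ∑ i ∈ range (d + 1), m.choose i * n ^ i + n * ∑ i ∈ range d, m.choose i * n ^ i := by
  rw [sum_range_succ' (fun i => (m + 1).choose i * n ^ i),
    sum_range_succ' (fun i => m.choose i * n ^ i), mul_sum]
  simp only [Nat.choose_succ_succ, add_mul, sum_add_distrib, Nat.choose_zero_right, pow_succ]
  rw [sum_congr rfl fun i _ => show n * (m.choose i * n ^ i) = m.choose i * (n ^ i * n) by ring]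
  ring

def cutSignPatterns (a : Fin q → E →ₗ[ℝ] ℝ) (b : Fin q → Fin n → ℝ) (f : E →ₗ[ℝ] ℝ) (c : ℝ) :
    Set (Fin q → Fin n → Bool) :=
  {ε | (∃ z, signPattern a b z = ε ∧ f z = c) ∧ ∃ z, signPattern a b z = ε ∧ c < f z}

theorem ncard_range_signPattern_succ_le (a : Fin (q + 1) → E →ₗ[ℝ] ℝ)
    (b : Fin (q + 1) → Fin n → ℝ) :
    (Set.range (signPattern a b)).ncard ≤
      (Set.range (signPattern (Fin.tail a) (Fin.tail b))).ncard +
        ∑ j, (cutSignPatterns (Fin.tail a) (Fin.tail b) (a 0) (b 0 j)).ncard := by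
  classical
  set σ := signPattern (Fin.tail a) (Fin.tail b)
  set T : (Fin q → Fin n → Bool) → Set ℝ := fun ε => a 0 '' (σ ⁻¹' {ε})
  set C : (Fin q → Fin n → Bool) → Fin n → Prop := fun ε j => b 0 j ∈ T ε ∧ ∃ t ∈ T ε, b 0 j < t
  set S := (Set.range σ).toFinset
  set fiber := fun ε => (fun r => (Fin.cons r ε : Fin (q + 1) → Fin n → Bool)) ''
    ((fun t j => decide (b 0 j < t)) '' T ε)
  have cover : Set.range (signPattern a b) ⊆ ⋃ ε ∈ S, fiber ε := by
    rintro _ ⟨z, rfl⟩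
    simp only [Set.mem_iUnion]
    exact ⟨σ z, by simp [S], _, ⟨a 0 z, ⟨z, rfl, rfl⟩, rfl⟩, Fin.cons_self_tail (signPattern a b z)⟩
  have ncard_fiber_le (ε) : (fiber ε).ncard ≤ {j | C ε j}.ncard + 1 :=
    (Set.ncard_image_le).trans <| ncard_image_threshold_le _
      ((convex_signPattern_preimage _ _ ε).linear_image (a 0)).ordConnected
  have double_count : ∑ ε ∈ S, {j | C ε j}.ncard = ∑ j, {ε | C ε j}.ncard := by
    have hS (j) : {ε | C ε j}.ncard = #{ε ∈ S | C ε j} := by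
      rw [Set.ncard_eq_toFinset_card']
      congr 1
      ext ε
      simp only [Set.mem_toFinset, Set.mem_ofPred_eq, mem_filter, S]
      refine ⟨fun h => ⟨?_, h⟩, And.right⟩
      obtain ⟨⟨z, hz, -⟩, -⟩ := h
      exact ⟨z, hz⟩
    simp only [hS, Set.ncard_eq_toFinset_card', Set.toFinset_ofPred, card_filter]
    exact sum_comm
  calc (Set.range (signPattern a b)).ncard
      ≤ (⋃ ε ∈ S, fiber ε).ncard := Set.ncard_le_ncard cover
    _ ≤ ∑ ε ∈ S, (fiber ε).ncard := set_ncard_biUnion_le _ _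
    _ ≤ ∑ ε ∈ S, ({j | C ε j}.ncard + 1) := sum_le_sum fun ε _ => ncard_fiber_le ε
    _ = _ := by
      rw [sum_add_distrib, double_count, ← card_eq_sum_ones, ← Set.ncard_eq_toFinset_card',
        add_comm]
      simp [C, T, σ, cutSignPatterns]

theorem ncard_range_signPattern_le [FiniteDimensional ℝ E] {d : ℕ} (hE : finrank ℝ E ≤ d)
    (a : Fin q → E →ₗ[ℝ] ℝ) (b : Fin q → Fin n → ℝ) :
    (Set.range (signPattern a b)).ncard ≤ ∑ i ∈ range (d + 1), q.choose i * n ^ i := by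
  induction q generalizing E d with
  | zero =>
    simpa [sum_range_succ'] using Set.ncard_le_one_of_subsingleton (Set.range (signPattern a b))
  | succ q ih =>
    set σ := signPattern (Fin.tail a) (Fin.tail b)
    have ncard_cut_le (j : Fin n) :
        (cutSignPatterns (Fin.tail a) (Fin.tail b) (a 0) (b 0 j)).ncard ≤
          ∑ i ∈ range d, q.choose i * n ^ i := by
      rcases Set.eq_empty_or_nonempty (cutSignPatterns (Fin.tail a) (Fin.tail b) (a 0) (b 0 j))
        with h | ⟨_, ⟨z, -, hz⟩, z', -, hz'⟩
      · simp [h]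
      have ha : a 0 ≠ 0 := fun h => by simp only [h, LinearMap.zero_apply] at hz hz'; linarith
      have hker := Module.Dual.finrank_ker_add_one_of_ne_zero ha
      obtain ⟨d, rfl⟩ : ∃ d', d = d' + 1 := ⟨d - 1, by omega⟩
      calc _ ≤ (σ '' {w | a 0 w = a 0 z}).ncard :=
            Set.ncard_le_ncard <| by
              rintro _ ⟨⟨w, hw, hw'⟩, -⟩
              exact ⟨w, hw'.trans hz.symm, hw⟩
        _ ≤ _ := by
          rw [image_signPattern_hyperplane]
          exact ih (by omega) _ _
    calc (Set.range (signPattern a b)).ncard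
        ≤ (Set.range σ).ncard +
            ∑ j, (cutSignPatterns (Fin.tail a) (Fin.tail b) (a 0) (b 0 j)).ncard :=
          ncard_range_signPattern_succ_le a b
      _ ≤ ∑ i ∈ range (d + 1), q.choose i * n ^ i + n * ∑ i ∈ range d, q.choose i * n ^ i := by
        grw [ih hE, sum_le_sum fun j _ => ncard_cut_le j, sum_const, card_univ, Fintype.card_fin,
          smul_eq_mul]
      _ = _ := (sum_range_choose_succ_mul_pow q n d).symm

end

theorem stmt7_general (d n q : ℕ)
    (a : Fin q → Fin d → ℝ) (b : Fin n → Fin q → ℝ) :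
    Set.ncard {ε : Fin n → Fin q → Bool |
        {z : Fin d → ℝ |
          (∀ j k, ε j k = false → ∑ t, a k t * z t ≤ b j k) ∧
          (∀ j k, ε j k = true → b j k < ∑ t, a k t * z t)}.Nonempty}
      ≤ ∑ i ∈ Finset.range (d + 1), q.choose i * n ^ i := by
  set A : Fin q → (Fin d → ℝ) →ₗ[ℝ] ℝ := fun k => dotProductBilin ℝ ℝ (a k)
  have hset : {ε : Fin n → Fin q → Bool |
        {z : Fin d → ℝ |
          (∀ j k, ε j k = false → ∑ t, a k t * z t ≤ b j k) ∧
          (∀ j k, ε j k = true → b j k < ∑ t, a k t * z t)}.Nonempty} =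
      Function.swap ⁻¹' Set.range (signPattern A (Function.swap b)) := by
    ext ε
    refine exists_congr fun z => ?_
    simp only [funext_iff, signPattern, ← forall_and, Function.swap]
    rw [forall_comm]
    refine forall₂_congr fun j k => ?_
    cases ε j k <;> simp [A, dotProduct]
  rw [hset, Set.ncard_preimage_of_injective_subset_range Function.swap_bijective.injective
    fun ε _ => ⟨Function.swap ε, rfl⟩]
  exact ncard_range_signPattern_le (finrank_fin_fun ℝ).le A _

theorem stmt7 (d n q : ℕ) (hd : 0 < d) (hn : 0 < n) (hq : 0 < q)
    (a : Fin q → Fin d → ℝ) (b : Fin n → Fin q → ℝ) :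
    Set.ncard {ε : Fin n → Fin q → Bool |
        {z : Fin d → ℝ |
          (∀ j k, ε j k = false → ∑ t, a k t * z t ≤ b j k) ∧
          (∀ j k, ε j k = true → b j k < ∑ t, a k t * z t)}.Nonempty}
      ≤ ∑ i ∈ Finset.range (d + 1), q.choose i * n ^ i :=
  stmt7_general d n q a b
end

section
/- Let d and N be positive integers, let f_1, …, f_N : ℝ^d → ℝ be affine functions, and let g : ℝ^d → ℝ be a nonconstant affine function with zero set H = {z ∈ ℝ^d : g(z) = 0}. For δ ∈ {0,1}^N, let Q(δ) = {z ∈ ℝ^d : f_t(z) ≤ 0 for all t with δ_t = 0, and f_t(z) > 0 for all t with δ_t = 1}. Then the number of pairs (δ, σ) ∈ {0,1}^N × {0,1} such that the set Q(δ) ∩ {z : g(z) ≤ 0 if σ = 0, g(z) > 0 if σ = 1} is nonempty is at most (the number of δ ∈ {0,1}^N with Q(δ) ≠ ∅) plus (the number of δ ∈ {0,1}^N with Q(δ) ∩ H ≠ ∅). -/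
/-!
Inductive step of the sign-region counting argument: adding the hyperplane
`H = {g = 0}` (the zero set of a nonconstant affine function `g`) to an
arrangement of affine functions `f_1, …, f_N` increases the number of
nonempty sign regions by at most the number of regions `Q(δ)` of the original
arrangement that meet `H`.
-/

open Finset

/-- `Q(δ)`: the sign region of the arrangement `f_1, …, f_N` determined by the
sign vector `δ` (`false` meaning `≤ 0`, `true` meaning `> 0`). -/
def signRegion (d N : ℕ) (f : Fin N → (Fin d → ℝ) → ℝ) (δ : Fin N → Bool) :
    Set (Fin d → ℝ) :=
  {z | (∀ t, δ t = false → f t z ≤ 0) ∧ (∀ t, δ t = true → 0 < f t z)}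

/-- Affine functions respect convex combinations of points of `ℝ^d`. -/
lemma aff_comb {d : ℕ} (a : Fin d → ℝ) (β c : ℝ) (x y : Fin d → ℝ) :
    (∑ s, a s * (c * x s + (1 - c) * y s)) + β
      = c * ((∑ s, a s * x s) + β) + (1 - c) * ((∑ s, a s * y s) + β) := by
  have h : ∀ s ∈ Finset.univ, a s * (c * x s + (1 - c) * y s)
      = c * (a s * x s) + (1 - c) * (a s * y s) := by
    intro s _; ring
  rw [Finset.sum_congr rfl h, Finset.sum_add_distrib, ← Finset.mul_sum, ← Finset.mul_sum]
  ring

/-- Key convexity step: if a sign region meets both `{g ≤ 0}` and `{g > 0}`,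
then it meets `{g = 0}`. -/
lemma key {d N : ℕ} (f : Fin N → (Fin d → ℝ) → ℝ)
    (hf : ∀ t, ∃ (a : Fin d → ℝ) (β : ℝ), ∀ z, f t z = (∑ s, a s * z s) + β)
    (g : (Fin d → ℝ) → ℝ)
    (hg : ∃ (a : Fin d → ℝ) (β : ℝ), ∀ z, g z = (∑ s, a s * z s) + β)
    (δ : Fin N → Bool)
    (h0 : (signRegion d N f δ ∩ {z | g z ≤ 0}).Nonempty)
    (h1 : (signRegion d N f δ ∩ {z | 0 < g z}).Nonempty) :
    (signRegion d N f δ ∩ {z | g z = 0}).Nonempty := by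
  obtain ⟨x, hxQ, hx⟩ := h0
  obtain ⟨y, hyQ, hy⟩ := h1
  have hx' : g x ≤ 0 := hx
  have hy' : 0 < g y := hy
  set u := g x with hu
  set v := g y with hv
  have hvu : 0 < v - u := by linarith
  set c : ℝ := v / (v - u) with hc
  have hc0 : 0 < c := div_pos hy' hvu
  have hc1' : 0 ≤ 1 - c := by
    have : c ≤ 1 := (div_le_one hvu).2 (by linarith)
    linarith
  have hcvu : c * (v - u) = v := by
    rw [hc]; field_simp
  have hsum : c * u + (1 - c) * v = 0 := by linear_combination -hcvu
  set p : Fin d → ℝ := fun s => c * x s + (1 - c) * y s with hp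
  have haff : ∀ (h : (Fin d → ℝ) → ℝ),
      (∃ (a : Fin d → ℝ) (β : ℝ), ∀ z, h z = (∑ s, a s * z s) + β) →
      h p = c * h x + (1 - c) * h y := by
    rintro h ⟨a, β, hab⟩
    rw [hab, hab, hab, hp]
    exact aff_comb a β c x y
  refine ⟨p, ⟨?_, ?_⟩, ?_⟩
  · intro t ht
    have heq := haff (f t) (hf t)
    have h1 := hxQ.1 t ht
    have h2 := hyQ.1 t ht
    nlinarith [mul_nonneg hc0.le (neg_nonneg.2 h1), mul_nonneg hc1' (neg_nonneg.2 h2)]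
  · intro t ht
    have heq := haff (f t) (hf t)
    have h1 := hxQ.2 t ht
    have h2 := hyQ.2 t ht
    nlinarith [mul_pos hc0 h1, mul_nonneg hc1' h2.le]
  · show g p = 0
    rw [haff g hg]
    exact hsum

/-- Generic counting step: if membership of `(a, σ)` in `S` implies `a ∈ A`,
and both signs occurring implies `a ∈ B`, then `#S ≤ #A + #B`. -/
lemma count_aux {α : Type*} [Finite α] (S : Set (α × Bool)) (A B : Set α)
    (hSA : ∀ p ∈ S, p.1 ∈ A)
    (hSB : ∀ a, (a, false) ∈ S → (a, true) ∈ S → a ∈ B) :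
    S.ncard ≤ A.ncard + B.ncard := by
  classical
  let F : α × Bool → α ⊕ α :=
    fun p => if p.2 = true ∧ (p.1, false) ∈ S then Sum.inr p.1 else Sum.inl p.1
  have hF : ∀ p, F p = if p.2 = true ∧ (p.1, false) ∈ S then Sum.inr p.1 else Sum.inl p.1 :=
    fun p => rfl
  have hinj : Set.InjOn F S := by
    intro p hp q hq hpq
    rw [hF, hF] at hpq
    by_cases hpc : p.2 = true ∧ (p.1, false) ∈ S <;>
      by_cases hqc : q.2 = true ∧ (q.1, false) ∈ S
    · rw [if_pos hpc, if_pos hqc] at hpq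
      exact Prod.ext_iff.mpr ⟨Sum.inr.inj hpq, hpc.1.trans hqc.1.symm⟩
    · rw [if_pos hpc, if_neg hqc] at hpq; exact absurd hpq (by simp)
    · rw [if_neg hpc, if_pos hqc] at hpq; exact absurd hpq (by simp)
    · rw [if_neg hpc, if_neg hqc] at hpq
      have h1 : p.1 = q.1 := Sum.inl.inj hpq
      refine Prod.ext_iff.mpr ⟨h1, ?_⟩
      rcases Bool.eq_false_or_eq_true p.2 with hp2 | hp2 <;>
        rcases Bool.eq_false_or_eq_true q.2 with hq2 | hq2
      · exact hp2.trans hq2.symm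
      · exfalso
        apply hpc
        refine ⟨hp2, ?_⟩
        have hqe : (q.1, false) = q := Prod.ext_iff.mpr ⟨rfl, hq2.symm⟩
        rw [h1, hqe]; exact hq
      · exfalso
        apply hqc
        refine ⟨hq2, ?_⟩
        have hpe : (p.1, false) = p := Prod.ext_iff.mpr ⟨rfl, hp2.symm⟩
        rw [← h1, hpe]; exact hp
      · exact hp2.trans hq2.symm
  have himg : F '' S ⊆ (Sum.inl '' A) ∪ (Sum.inr '' B) := by
    rintro _ ⟨p, hp, rfl⟩
    rw [hF]
    by_cases hpc : p.2 = true ∧ (p.1, false) ∈ S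
    · rw [if_pos hpc]
      right
      refine ⟨p.1, hSB p.1 hpc.2 ?_, rfl⟩
      have hpe : (p.1, true) = p := Prod.ext_iff.mpr ⟨rfl, hpc.1.symm⟩
      rw [hpe]; exact hp
    · rw [if_neg hpc]
      exact Or.inl ⟨p.1, hSA p hp, rfl⟩
  calc S.ncard = (F '' S).ncard := (Set.ncard_image_of_injOn hinj).symm
    _ ≤ ((Sum.inl '' A) ∪ (Sum.inr '' B)).ncard :=
        Set.ncard_le_ncard himg (Set.toFinite _)
    _ ≤ (Sum.inl '' A : Set (α ⊕ α)).ncard + (Sum.inr '' B : Set (α ⊕ α)).ncard :=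
        Set.ncard_union_le _ _
    _ = A.ncard + B.ncard := by
        rw [Set.ncard_image_of_injective _ Sum.inl_injective,
          Set.ncard_image_of_injective _ Sum.inr_injective]

theorem stmt10 (d N : ℕ) (hd : 0 < d) (hN : 0 < N)
    (f : Fin N → (Fin d → ℝ) → ℝ)
    (hf : ∀ t, ∃ (a : Fin d → ℝ) (β : ℝ), ∀ z, f t z = (∑ s, a s * z s) + β)
    (g : (Fin d → ℝ) → ℝ)
    (hg : ∃ (a : Fin d → ℝ) (β : ℝ), a ≠ 0 ∧ ∀ z, g z = (∑ s, a s * z s) + β) :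
    Set.ncard {p : (Fin N → Bool) × Bool |
        (signRegion d N f p.1 ∩
          {z | if p.2 then 0 < g z else g z ≤ 0}).Nonempty}
      ≤ Set.ncard {δ : Fin N → Bool | (signRegion d N f δ).Nonempty}
        + Set.ncard {δ : Fin N → Bool |
            (signRegion d N f δ ∩ {z | g z = 0}).Nonempty} := by
  obtain ⟨ga, gβ, _, hgab⟩ := hg
  have hg' : ∃ (a : Fin d → ℝ) (β : ℝ), ∀ z, g z = (∑ s, a s * z s) + β := ⟨ga, gβ, hgab⟩
  apply count_aux
  · rintro p ⟨z, hz, _⟩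
    exact ⟨z, hz⟩
  · intro a h0 h1
    apply key f hf g hg' a
    · simpa using h0
    · simpa using h1
end
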